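/- If Y is a nonnegative random variable with Var(Y) ≤ δ·(E[Y])² for some δ ≥ 0 and the second derivative of x ↦ x^{3/2} is bounded by Λ = (3/4)(inf supp Y)^{−1/2} on the support of Y, with inf supp Y ≥ c·E[Y] for some c > 0, then E[Y^{3/2}] ≤ (1 + 3δ/(8√c))·(E[Y])^{3/2}. -/

import Mathlib

open MeasureTheory ProbabilityTheory

/-! The function `f(x) = x^{3/2}` has `f''(x) = (3/4) x^{-1/2} ≤ Λ := (3/4) m^{-1/2}` on `[m, ∞)`,
so there it lies below its tangent at `M = E[Y]` plus `(Λ/2)(x - M)²`. Taking `m = c·E[Y]` and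
integrating, the linear term vanishes and the quadratic one contributes `(Λ/2) Var(Y)`, which is
at most `3δ/(8√c) · E[Y]^{3/2}`. -/

theorem cube_le_taylor_of_le {a b s : ℝ} (hs : 0 < s) (ha : s ≤ a) (hb : s ≤ b) :
    a ^ 3 ≤ b ^ 3 + 3 / 2 * b * (a ^ 2 - b ^ 2) + 3 / (8 * s) * (a ^ 2 - b ^ 2) ^ 2 := by
  -- The remainder is `(a - b)²(2a + b)/2`, and `(a² - b²)² = (a - b)²(a + b)²`.
  have hcoef : 4 * s * (2 * a + b) ≤ 3 * (a + b) ^ 2 := by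
    nlinarith [mul_nonneg hs.le (sub_nonneg.2 ha), mul_nonneg hs.le (sub_nonneg.2 hb)]
  have hrem : a ^ 3 - b ^ 3 - 3 / 2 * b * (a ^ 2 - b ^ 2) ≤ 3 / (8 * s) * (a ^ 2 - b ^ 2) ^ 2 := by
    calc a ^ 3 - b ^ 3 - 3 / 2 * b * (a ^ 2 - b ^ 2)
        = (a - b) ^ 2 * (4 * s * (2 * a + b)) / (8 * s) := by field_simp; ring
      _ ≤ (a - b) ^ 2 * (3 * (a + b) ^ 2) / (8 * s) := by gcongr
      _ = 3 / (8 * s) * (a ^ 2 - b ^ 2) ^ 2 := by ring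
  linarith

theorem rpow_three_halves_le_taylor {x a m : ℝ} (hm : 0 < m) (hx : m ≤ x) (ha : m ≤ a) :
    x ^ (3 / 2 : ℝ) ≤ a ^ (3 / 2 : ℝ) + 3 / 2 * √a * (x - a) + 3 / (8 * √m) * (x - a) ^ 2 := by
  have hx0 : 0 ≤ x := hm.le.trans hx
  have ha0 : 0 ≤ a := hm.le.trans ha
  have h := cube_le_taylor_of_le (Real.sqrt_pos.2 hm) (Real.sqrt_le_sqrt hx) (Real.sqrt_le_sqrt ha)
  rw [Real.sq_sqrt hx0, Real.sq_sqrt ha0] at h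
  rw [Real.rpow_div_two_eq_sqrt _ hx0, Real.rpow_div_two_eq_sqrt _ ha0]
  exact_mod_cast h

theorem integral_le_of_ae_le_quadratic {Ω : Type*} [MeasurableSpace Ω] {μ : Measure Ω}
    [IsProbabilityMeasure μ] {X g : Ω → ℝ} {α β γ : ℝ} (hX : MemLp X 2 μ) (hg : Integrable g μ)
    (h : ∀ᵐ ω ∂μ, g ω ≤ α + β * (X ω - μ[X]) + γ * (X ω - μ[X]) ^ 2) :
    μ[g] ≤ α + γ * Var[X; μ] := by
  have hlin : Integrable (fun ω ↦ X ω - μ[X]) μ :=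
    (hX.integrable one_le_two).sub (integrable_const _)
  have hsq : Integrable (fun ω ↦ (X ω - μ[X]) ^ 2) μ :=
    (hX.sub (memLp_const _)).integrable_sq
  have hcentered : ∫ ω, (X ω - μ[X]) ∂μ = 0 := by
    rw [integral_sub (hX.integrable one_le_two) (integrable_const _)]
    simp
  have haffine : Integrable (fun ω ↦ α + β * (X ω - μ[X])) μ :=
    (integrable_const _).add (hlin.const_mul _)
  calc μ[g] ≤ ∫ ω, (α + β * (X ω - μ[X]) + γ * (X ω - μ[X]) ^ 2) ∂μ :=
        integral_mono_ae (f := g) hg (haffine.add (hsq.const_mul _)) h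
    _ = α + γ * Var[X; μ] := by
        rw [integral_add haffine (hsq.const_mul _), integral_add (integrable_const _)
          (hlin.const_mul _), integral_const_mul, integral_const_mul, hcentered,
          variance_eq_integral hX.aemeasurable]
        simp

theorem stmt_4_general {Ω : Type*} [MeasurableSpace Ω] (μ : Measure Ω) [IsProbabilityMeasure μ]
    (Y : Ω → ℝ) (δ c : ℝ) (hc : 0 < c)
    (hYint : Integrable Y μ)
    (hY2int : Integrable (fun ω => (Y ω) ^ 2) μ)
    (hY32int : Integrable (fun ω => (Y ω) ^ (3 / 2 : ℝ)) μ)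
    (hmean : 0 < ∫ ω, Y ω ∂μ)
    (hvar : (∫ ω, (Y ω) ^ 2 ∂μ) - (∫ ω, Y ω ∂μ) ^ 2 ≤ δ * (∫ ω, Y ω ∂μ) ^ 2)
    (hinf : ∀ᵐ ω ∂μ, c * (∫ ω', Y ω' ∂μ) ≤ Y ω) :
    ∫ ω, (Y ω) ^ (3 / 2 : ℝ) ∂μ ≤
      (1 + 3 * δ / (8 * Real.sqrt c)) * (∫ ω, Y ω ∂μ) ^ (3 / 2 : ℝ) := by
  set M := ∫ ω, Y ω ∂μ
  have hY : MemLp Y 2 μ := (memLp_two_iff_integrable_sq hYint.aestronglyMeasurable).2 hY2int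
  have hcM : 0 < c * M := mul_pos hc hmean
  have hcM_le : c * M ≤ M := by simpa using integral_mono_ae (integrable_const _) hYint hinf
  have hVar : Var[Y; μ] ≤ δ * M ^ 2 := by
    rw [variance_eq_sub hY]
    simpa using hvar
  have hsqrt : √(c * M) = √c * √M := Real.sqrt_mul hc.le M
  have hM32 : M ^ (3 / 2 : ℝ) = √M ^ 3 := by
    rw [Real.rpow_div_two_eq_sqrt 3 hmean.le]; norm_cast
  have hM2 : M ^ 2 = √M ^ 4 := by
    rw [show 4 = 2 * 2 from rfl, pow_mul, Real.sq_sqrt hmean.le]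
  calc ∫ ω, Y ω ^ (3 / 2 : ℝ) ∂μ
      ≤ M ^ (3 / 2 : ℝ) + 3 / (8 * √(c * M)) * Var[Y; μ] :=
        integral_le_of_ae_le_quadratic hY hY32int
          (hinf.mono fun ω h ↦ rpow_three_halves_le_taylor hcM h hcM_le)
    _ ≤ M ^ (3 / 2 : ℝ) + 3 / (8 * √(c * M)) * (δ * M ^ 2) := by gcongr
    _ = (1 + 3 * δ / (8 * √c)) * M ^ (3 / 2 : ℝ) := by
        rw [hsqrt, hM32, hM2]
        field_simp

/-- if `Y ≥ 0`, `Var(Y) ≤ δ(E[Y])²` for some `δ ≥ 0`, and the (essential)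
infimum of the support of `Y` is at least `c·E[Y]` with `c > 0` (so that the second
derivative of `x ↦ x^{3/2}` is bounded by `Λ = (3/4)(inf supp Y)^{−1/2}` on the support),
then `E[Y^{3/2}] ≤ (1 + 3δ/(8√c))·(E[Y])^{3/2}`. -/
theorem stmt_4 {Ω : Type*} [MeasurableSpace Ω] (μ : Measure Ω) [IsProbabilityMeasure μ]
    (Y : Ω → ℝ) (δ c : ℝ) (hδ : 0 ≤ δ) (hc : 0 < c)
    (hY0 : ∀ ω, 0 ≤ Y ω)
    (hYmeas : Measurable Y)
    (hYint : Integrable Y μ)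
    (hY2int : Integrable (fun ω => (Y ω) ^ 2) μ)
    (hY32int : Integrable (fun ω => (Y ω) ^ (3 / 2 : ℝ)) μ)
    (hmean : 0 < ∫ ω, Y ω ∂μ)
    (hvar : (∫ ω, (Y ω) ^ 2 ∂μ) - (∫ ω, Y ω ∂μ) ^ 2 ≤ δ * (∫ ω, Y ω ∂μ) ^ 2)
    (hinf : ∀ᵐ ω ∂μ, c * (∫ ω', Y ω' ∂μ) ≤ Y ω) :
    ∫ ω, (Y ω) ^ (3 / 2 : ℝ) ∂μ ≤
      (1 + 3 * δ / (8 * Real.sqrt c)) * (∫ ω, Y ω ∂μ) ^ (3 / 2 : ℝ) :=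
  stmt_4_general μ Y δ c hc hYint hY2int hY32int hmean hvar hinf
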